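/- arXiv:1411.2472 — 2 statements merged into one kernel-verified Lean document; each statement's English description precedes it below -/
import Mathlib

section
/- Let B be a unital Banach algebra with the inner derivation property and Δ a 2-local derivation on M_2(B) vanishing on the span of the four matrix units and on all diagonal matrices. Then the diagonal entries of Δ(x) vanish for every x ∈ M_2(B): e_{1,1}Δ(x)e_{1,1} = 0 and e_{2,2}Δ(x)e_{2,2} = 0. -/
open Matrix

def IsDerivation {A : Type*} [Ring A] [Algebra ℂ A] (D : A → A) : Prop :=
  (∀ x y, D (x + y) = D x + D y) ∧ (∀ (c : ℂ) (x), D (c • x) = c • D x) ∧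
  (∀ x y, D (x * y) = D x * y + x * D y)

def Is2LocalDerivation {A : Type*} [Ring A] [Algebra ℂ A] (Δ : A → A) : Prop :=
  ∀ x y, ∃ D, IsDerivation D ∧ Δ x = D x ∧ Δ y = D y

def HasInnerDerivationProperty (A : Type*) [Ring A] [Algebra ℂ A] : Prop :=
  ∀ D : A → A, IsDerivation D → ∃ a : A, ∀ x, D x = a * x - x * a

/-- `Δ` vanishes on the linear span of the matrix units. -/
def VanishesOnUnits {A : Type*} [Ring A] [Algebra ℂ A] {n : ℕ}
    (Δ : Matrix (Fin n) (Fin n) A → Matrix (Fin n) (Fin n) A) : Prop :=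
  ∀ x ∈ Submodule.span ℂ (Set.range fun p : Fin n × Fin n =>
      Matrix.single p.1 p.2 (1 : A)), Δ x = 0
/-- `Δ` vanishes on all diagonal matrices. -/
def VanishesOnDiag {A : Type*} [Ring A] [Algebra ℂ A] {n : ℕ}
    (Δ : Matrix (Fin n) (Fin n) A → Matrix (Fin n) (Fin n) A) : Prop :=
  ∀ x : Matrix (Fin n) (Fin n) A, (∀ i j : Fin n, i ≠ j → x i j = 0) → Δ x = 0

/-!
Fix `x` and put `y = diag(x₀₀, x₁₁ + c)` with `c > ‖x₀₀‖ + ‖x₁₁‖`, so that `Δ y = 0`. A derivation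
`D` agreeing with `Δ` at `x` and `y` is inner, `D = [A, ·]`, because derivations of `M_n(B)` are
inner once those of `B` are. Then `A` commutes with `y`: its off-diagonal entries `r` satisfy
Sylvester equations `c r = a r - r b` with `‖a‖ + ‖b‖ < c`, which force `r = 0`, and its diagonal
entries commute with those of `x`. Hence the diagonal of `[A, x]` vanishes.
-/

namespace IsDerivation

section

variable {A : Type*} [Ring A] [Algebra ℂ A] {D : A → A}

theorem map_one (hD : IsDerivation D) : D 1 = 0 := by
  simpa using hD.2.2 1 1

theorem map_sum (hD : IsDerivation D) {ι : Type*} (s : Finset ι) (f : ι → A) :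
    D (∑ i ∈ s, f i) = ∑ i ∈ s, D (f i) :=
  _root_.map_sum (AddMonoidHom.mk' D hD.1) f s

theorem sub_commutator (hD : IsDerivation D) (a : A) :
    IsDerivation fun x => D x - (a * x - x * a) := by
  obtain ⟨hadd, hsmul, hmul⟩ := hD
  refine ⟨fun x y => ?_, fun c x => ?_, fun x y => ?_⟩
  · simp only [hadd, mul_add, add_mul]; abel
  · simp only [hsmul, mul_smul_comm, smul_mul_assoc, smul_sub]
  · simp only [hmul]; noncomm_ring

end

section

variable {n : Type*} [Fintype n] [DecidableEq n] {B : Type*} [Ring B] [Algebra ℂ B]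
  {D : Matrix n n B → Matrix n n B}

theorem exists_map_single_one_eq_commutator [Nonempty n] (hD : IsDerivation D) :
    ∃ a, ∀ i j : n, D (single i j 1) = a * single i j 1 - single i j 1 * a := by
  obtain ⟨k⟩ := ‹Nonempty n›
  have hmul := hD.2.2
  set a := ∑ l, D (single l k 1) * single k l (1 : B)
  have ha : a = -∑ l, single l k (1 : B) * D (single k l 1) := by
    have hunit : (1 : Matrix n n B) = ∑ l, single l k (1 : B) * single k l 1 := by
      simp [sum_single_one]
    have h := hD.map_one
    rw [hunit, hD.map_sum] at h
    simp only [hmul, Finset.sum_add_distrib] at h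
    exact eq_neg_of_add_eq_zero_left h
  refine ⟨a, fun i j => ?_⟩
  have hleft : a * single i j 1 = D (single i k 1) * single k j 1 := by
    rw [Finset.sum_mul, Finset.sum_eq_single i]
    · rw [mul_assoc, single_mul_single_same, mul_one]
    · intro l _ hl
      rw [mul_assoc, single_mul_single_of_ne _ _ _ _ hl, mul_zero]
    · simp
  have hright : single i j 1 * a = -(single i k 1 * D (single k j 1)) := by
    rw [ha, mul_neg, Finset.mul_sum, Finset.sum_eq_single j]
    · rw [← mul_assoc, single_mul_single_same, mul_one]
    · intro l _ hl
      rw [← mul_assoc, single_mul_single_of_ne _ _ _ _ (Ne.symm hl), zero_mul]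
    · simp
  rw [hleft, hright, sub_neg_eq_add, ← hmul, single_mul_single_same, one_mul]

theorem exists_eq_map_of_map_single_one_eq_zero [Nonempty n] (hD : IsDerivation D)
    (h0 : ∀ i j : n, D (single i j 1) = 0) :
    ∃ d : B → B, IsDerivation d ∧ ∀ x, D x = x.map d := by
  obtain ⟨k⟩ := ‹Nonempty n›
  have hmul := hD.2.2
  let d b := D (single k k b) k k
  have hsingle : ∀ i j b, D (single i j b) = single i j (d b) := by
    intro i j b
    have : single i j b = single i k 1 * single k k b * single k j 1 := by simp
    rw [this, hmul, hmul, h0, h0]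
    simp [d]
  refine ⟨d, ⟨fun b c => ?_, fun c b => ?_, fun b c => ?_⟩, fun x => ?_⟩
  · simp only [d, single_add, hD.1, Matrix.add_apply]
  · simp only [d, ← smul_single, hD.2.1, Matrix.smul_apply]
  · have : single k k (b * c) = single k k b * single k k c := by simp
    change D _ k k = d b * c + b * d c
    rw [this, hmul, hsingle, hsingle, Matrix.add_apply, single_mul_apply_same,
      mul_single_apply_same, single_apply_same, single_apply_same]
  · conv_lhs => rw [matrix_eq_sum_single x]
    simp only [hD.map_sum, hsingle]
    exact sum_sum_single _

end

end IsDerivation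

theorem Matrix.hasInnerDerivationProperty {n : Type*} [Fintype n] [DecidableEq n]
    {B : Type*} [Ring B] [Algebra ℂ B] (hB : HasInnerDerivationProperty B) :
    HasInnerDerivationProperty (Matrix n n B) := by
  intro D hD
  rcases isEmpty_or_nonempty n with _ | _
  · exact ⟨0, fun _ => Subsingleton.elim _ _⟩
  obtain ⟨a, ha⟩ := hD.exists_map_single_one_eq_commutator
  obtain ⟨d, hd, hDa⟩ := (hD.sub_commutator a).exists_eq_map_of_map_single_one_eq_zero
    fun i j => by rw [ha, sub_self]
  obtain ⟨c, hc⟩ := hB d hd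
  refine ⟨a + diagonal fun _ => c, fun x => ?_⟩
  have hmap : x.map d = (diagonal fun _ => c) * x - x * diagonal fun _ => c := by
    ext i j
    simp [hc, diagonal_mul, mul_diagonal]
  rw [sub_eq_iff_eq_add.mp (hDa x), hmap, add_mul, mul_add]
  abel

theorem eq_zero_of_mul_sub_mul_eq_smul {𝕜 B : Type*} [NormedField 𝕜] [NormedRing B]
    [NormedSpace 𝕜 B] {a b r : B} {c : 𝕜} (h : a * r - r * b = c • r)
    (hc : ‖a‖ + ‖b‖ < ‖c‖) : r = 0 := by
  by_contra hr
  have hle : ‖c‖ * ‖r‖ ≤ (‖a‖ + ‖b‖) * ‖r‖ :=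
    calc ‖c‖ * ‖r‖ = ‖a * r - r * b‖ := by rw [h, norm_smul]
      _ ≤ ‖a * r‖ + ‖r * b‖ := norm_sub_le _ _
      _ ≤ ‖a‖ * ‖r‖ + ‖r‖ * ‖b‖ := add_le_add (norm_mul_le _ _) (norm_mul_le _ _)
      _ = (‖a‖ + ‖b‖) * ‖r‖ := by ring
  exact hc.not_ge (le_of_mul_le_mul_right hle (norm_pos_iff.mpr hr))

namespace Matrix

variable {n B : Type*} [Fintype n] [DecidableEq n]

theorem apply_mul_eq_mul_apply_of_commute_diagonal [Semiring B] {A : Matrix n n B} {d : n → B}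
    (h : Commute A (diagonal d)) (i j : n) : A i j * d j = d i * A i j := by
  simpa [mul_diagonal, diagonal_mul] using congr_fun₂ h.eq i j

theorem IsDiag.commutator_apply_self [Ring B] {A : Matrix n n B} (hA : A.IsDiag)
    (x : Matrix n n B) {i : n} (h : Commute (A i i) (x i i)) : (A * x - x * A) i i = 0 := by
  rw [← hA.diagonal_diag]
  simp [diagonal_mul, mul_diagonal, h.eq]

theorem isDiag_of_commute_diagonal_add_smul_one {𝕜 : Type*} [NormedField 𝕜] [NormedRing B]
    [NormedAlgebra 𝕜 B] {A : Matrix (Fin 2) (Fin 2) B} {p q : B} {c : 𝕜}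
    (hc : ‖p‖ + ‖q‖ < ‖c‖) (h : Commute A (diagonal ![p, q + c • 1])) : A.IsDiag := by
  have h01 : A 0 1 = 0 := by
    refine eq_zero_of_mul_sub_mul_eq_smul (a := p) (b := q) ?_ hc
    have := apply_mul_eq_mul_apply_of_commute_diagonal h 0 1
    simp only [cons_val_zero, cons_val_one, mul_add, mul_smul_comm, mul_one] at this
    rw [← this]; abel
  have h10 : A 1 0 = 0 := by
    refine eq_zero_of_mul_sub_mul_eq_smul (a := -q) (b := -p) ?_ (by simpa [add_comm] using hc)
    have := apply_mul_eq_mul_apply_of_commute_diagonal h 1 0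
    simp only [cons_val_zero, cons_val_one, add_mul, smul_mul_assoc, one_mul] at this
    rw [neg_mul, mul_neg, this]; abel
  intro i j hij
  fin_cases i <;> fin_cases j <;> simp_all

end Matrix

theorem stmt11_general {B : Type*} [NormedRing B] [NormedAlgebra ℂ B]
    (hidp : HasInnerDerivationProperty B)
    (Δ : Matrix (Fin 2) (Fin 2) B → Matrix (Fin 2) (Fin 2) B)
    (hΔ : Is2LocalDerivation Δ)
    (hdiag : VanishesOnDiag Δ) :
    ∀ x : Matrix (Fin 2) (Fin 2) B, Δ x 0 0 = 0 ∧ Δ x 1 1 = 0 := by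
  intro x
  set c : ℂ := ((‖x 0 0‖ + ‖x 1 1‖ + 1 : ℝ) : ℂ)
  have hc : ‖x 0 0‖ + ‖x 1 1‖ < ‖c‖ := by
    rw [Complex.norm_real, Real.norm_of_nonneg (by positivity)]
    linarith
  set y := diagonal ![x 0 0, x 1 1 + c • 1]
  obtain ⟨D, hD, hDx, hDy⟩ := hΔ x y
  obtain ⟨A, hA⟩ := hasInnerDerivationProperty hidp D hD
  have hAy : Commute A y := by
    rw [Commute, SemiconjBy, ← sub_eq_zero, ← hA, ← hDy]
    exact hdiag y fun i j => diagonal_apply_ne _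
  have hAdiag := isDiag_of_commute_diagonal_add_smul_one hc hAy
  have h00 : Commute (A 0 0) (x 0 0) := apply_mul_eq_mul_apply_of_commute_diagonal hAy 0 0
  have h11 : Commute (A 1 1) (x 1 1) := by
    have h : Commute (A 1 1) (x 1 1 + c • 1) :=
      apply_mul_eq_mul_apply_of_commute_diagonal hAy 1 1
    simpa using h.sub_right ((Commute.one_right (A 1 1)).smul_right c)
  rw [hDx, hA]
  exact ⟨hAdiag.commutator_apply_self x h00, hAdiag.commutator_apply_self x h11⟩

theorem stmt11 {B : Type*} [NormedRing B] [NormedAlgebra ℂ B] [CompleteSpace B]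
    (hidp : HasInnerDerivationProperty B)
    (Δ : Matrix (Fin 2) (Fin 2) B → Matrix (Fin 2) (Fin 2) B)
    (hΔ : Is2LocalDerivation Δ) (hvan : VanishesOnUnits Δ)
    (hdiag : VanishesOnDiag Δ) :
    ∀ x : Matrix (Fin 2) (Fin 2) B, Δ x 0 0 = 0 ∧ Δ x 1 1 = 0 :=
  stmt11_general hidp Δ hΔ hdiag
end

section
/- Let Δ be a 2-local derivation on M_2(B) vanishing on the span of the matrix units and on diagonal matrices. If x = [[e + b, b],[λe, 0]] with b ∈ B, ‖b‖ < 1, λ ∈ ℂ, and e the unit of B, then Δ(x) = 0. -/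
/-!
Every derivation `D` of `M_n(A)` is inner once every derivation of `A` is: subtracting the
commutator with `∑ₖ D(e_{k i₀}) e_{i₀ k}` leaves a derivation that kills all matrix units, and
such a derivation acts entrywise by a derivation of `A`, which is inner.

Hence `Δ x = [a, x]` with `a` commuting with any prescribed `y` such that `Δ y = 0`.
Taking `y = diag(e + b, 0)`, invertibility of `e + b` kills the `(0,0)` entry of `Δ x`, and
`y = e₀₁` kills its `(1,0)` entry. For `y = e₁₀` we get `a = [[c, 0], [r, c]]`; the two vanishing
entries force `r = 0` and `c b = b c`, so `a` is a scalar commuting with every entry of `x`.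
-/

open Matrix

section

variable {A : Type*} [Ring A] [Algebra ℂ A]

namespace IsDerivation

variable {D : A → A}

theorem map_zero (hD : IsDerivation D) : D 0 = 0 := by
  simpa using hD.2.1 0 0

theorem map_mul_of_left (hD : IsDerivation D) {x : A} (hx : D x = 0) (y : A) :
    D (x * y) = x * D y := by
  rw [hD.2.2, hx, zero_mul, zero_add]

theorem map_mul_of_right (hD : IsDerivation D) {y : A} (hy : D y = 0) (x : A) :
    D (x * y) = D x * y := by
  rw [hD.2.2, hy, mul_zero, add_zero]

theorem sub {D' : A → A} (hD : IsDerivation D) (hD' : IsDerivation D') :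
    IsDerivation fun x => D x - D' x := by
  refine ⟨fun x y => ?_, fun c x => ?_, fun x y => ?_⟩ <;> dsimp only
  · rw [hD.1, hD'.1]; abel
  · rw [hD.2.1, hD'.2.1, smul_sub]
  · rw [hD.2.2, hD'.2.2]; noncomm_ring

end IsDerivation

theorem isDerivation_commutator (a : A) : IsDerivation fun x => a * x - x * a := by
  refine ⟨fun x y => ?_, fun c x => ?_, fun x y => ?_⟩ <;> dsimp only
  · noncomm_ring
  · rw [mul_smul_comm, smul_mul_assoc, smul_sub]
  · noncomm_ring

theorem Is2LocalDerivation.exists_commute_of_map_eq_zero {Δ : A → A}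
    (hΔ : Is2LocalDerivation Δ) (hA : HasInnerDerivationProperty A) (x : A) {y : A}
    (hy : Δ y = 0) : ∃ a, Commute a y ∧ Δ x = a * x - x * a := by
  obtain ⟨D, hD, hDx, hDy⟩ := hΔ x y
  obtain ⟨a, ha⟩ := hA D hD
  exact ⟨a, sub_eq_zero.mp (by rw [← ha, ← hDy, hy]), by rw [hDx, ha]⟩

end

namespace Matrix

variable {α n : Type*} [Semiring α] [Fintype n] [DecidableEq n]

theorem scalar_mul_single_one (u : α) (i j : n) : scalar n u * single i j 1 = single i j u := by
  rw [scalar_apply, ← smul_eq_diagonal_mul, smul_single, smul_eq_mul, mul_one]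

theorem single_one_mul_scalar (u : α) (i j : n) : single i j 1 * scalar n u = single i j u := by
  rw [scalar_apply, ← op_smul_eq_mul_diagonal, smul_single, MulOpposite.smul_eq_mul_unop,
    MulOpposite.unop_op, one_mul]

end Matrix

section

variable {A n : Type*} [Ring A] [Algebra ℂ A] [Fintype n] [DecidableEq n]

namespace IsDerivation

variable {D : Matrix n n A → Matrix n n A}

theorem exists_eq_commutator_on_single (hD : IsDerivation D) (i₀ : n) :
    ∃ a, ∀ i j, D (single i j 1) = a * single i j 1 - single i j 1 * a := by
  refine ⟨∑ k, D (single k i₀ 1) * single i₀ k 1, fun i j => ?_⟩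
  have hleft : (∑ k, D (single k i₀ 1) * single i₀ k 1) * single i j 1
      = D (single i i₀ 1) * single i₀ j 1 := by
    rw [Finset.sum_mul, Finset.sum_eq_single i]
    · rw [mul_assoc, single_mul_single_same, mul_one]
    · intro k _ hk
      rw [mul_assoc, single_mul_single_of_ne (h := hk), mul_zero]
    · simp
  have hright : single i j 1 * ∑ k, D (single k i₀ 1) * single i₀ k 1
      = D (single i i₀ 1) * single i₀ j 1 - D (single i j 1) := by
    have hterm : ∀ k, single i j 1 * (D (single k i₀ 1) * single i₀ k 1)
        = D (single i j 1 * single k i₀ 1) * single i₀ k 1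
          - D (single i j 1) * (single k i₀ 1 * single i₀ k 1) := by
      intro k; rw [hD.2.2]; noncomm_ring
    rw [Finset.mul_sum, Finset.sum_congr rfl fun k _ => hterm k, Finset.sum_sub_distrib,
      ← Finset.mul_sum, Finset.sum_eq_single j]
    · simp [sum_single_one]
    · intro k _ hk
      rw [single_mul_single_of_ne (h := hk.symm), hD.map_zero, zero_mul]
    · simp
  rw [hleft, hright, sub_sub_cancel]

theorem map_scalar_mem_range (hD : IsDerivation D) (h0 : ∀ i j, D (single i j 1) = 0) (u : A) :
    D (scalar n u) ∈ Set.range (scalar n) := by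
  refine mem_range_scalar_iff_commute_single'.mpr fun i j => ?_
  rw [Commute, SemiconjBy, ← hD.map_mul_of_left (h0 i j), ← hD.map_mul_of_right (h0 i j),
    scalar_mul_single_one, single_one_mul_scalar]

theorem apply_apply_eq_of_map_scalar (hD : IsDerivation D) (h0 : ∀ i j, D (single i j 1) = 0)
    {δ : A → A} (hδ : ∀ u, D (scalar n u) = scalar n (δ u)) (M : Matrix n n A) (i j : n) :
    D M i j = δ (M i j) := by
  have key : single i i (D M i j) = single i i (δ (M i j)) := by
    calc single i i (D M i j) = single i i 1 * D M * single j i 1 := by simp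
      _ = D (single i i 1 * M * single j i 1) := by
        rw [hD.map_mul_of_right (h0 j i), hD.map_mul_of_left (h0 i i)]
      _ = single i i (δ (M i j)) := by
        rw [single_mul_mul_single, one_mul, mul_one, ← scalar_mul_single_one,
          hD.map_mul_of_right (h0 i i), hδ, scalar_mul_single_one]
  simpa using congr($key i i)

theorem of_map_scalar [Nonempty n] (hD : IsDerivation D) {δ : A → A}
    (hδ : ∀ u, D (scalar n u) = scalar n (δ u)) : IsDerivation δ := by
  refine ⟨fun u v => (scalar_inj (n := n)).mp ?_, fun c u => (scalar_inj (n := n)).mp ?_,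
    fun u v => (scalar_inj (n := n)).mp ?_⟩
  · simp only [← hδ, map_add, hD.1]
  · have hsmul : ∀ v : A, scalar n (c • v) = c • scalar n v :=
      map_smul (scalarAlgHom n ℂ) c
    rw [← hδ, hsmul, hD.2.1, hδ, hsmul]
  · simp only [← hδ, map_add, map_mul, hD.2.2]

end IsDerivation

theorem HasInnerDerivationProperty.matrix (hA : HasInnerDerivationProperty A) :
    HasInnerDerivationProperty (Matrix n n A) := by
  intro D hD
  rcases isEmpty_or_nonempty n with _ | _
  · exact ⟨0, fun _ => Subsingleton.elim _ _⟩
  obtain ⟨a, ha⟩ := hD.exists_eq_commutator_on_single (Classical.arbitrary n)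
  have hD' : IsDerivation fun M => D M - (a * M - M * a) := hD.sub (isDerivation_commutator a)
  have h0 : ∀ i j, D (single i j 1) - (a * single i j 1 - single i j 1 * a) = 0 :=
    fun i j => sub_eq_zero.mpr (ha i j)
  choose δ hδ using hD'.map_scalar_mem_range h0
  obtain ⟨c, hc⟩ := hA δ (hD'.of_map_scalar fun u => (hδ u).symm)
  refine ⟨a + scalar n c, fun M => ?_⟩
  have hM : D M - (a * M - M * a) = scalar n c * M - M * scalar n c := by
    ext i j
    rw [hD'.apply_apply_eq_of_map_scalar h0 (fun u => (hδ u).symm), hc]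
    simp
  rw [← sub_add_cancel (D M) (a * M - M * a), hM]
  noncomm_ring

end

section TwoByTwo

variable {B : Type*} [Ring B] [Algebra ℂ B] {b : B} {lam : ℂ} {a : Matrix (Fin 2) (Fin 2) B}

local notation "X" => !![1 + b, b; lam • (1 : B), 0]

theorem commutator_X_eq (a : Matrix (Fin 2) (Fin 2) B) :
    a * X - X * a =
      !![a 0 0 * (1 + b) + lam • a 0 1 - ((1 + b) * a 0 0 + b * a 1 0),
          a 0 0 * b - ((1 + b) * a 0 1 + b * a 1 1);
        a 1 0 * (1 + b) + lam • a 1 1 - lam • a 0 0, a 1 0 * b - lam • a 0 1] := by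
  rw [eta_fin_two a]
  simp

theorem commutator_X_zero_zero_of_commute_diagonal (hu : IsUnit (1 + b))
    (ha : Commute a (diagonal ![1 + b, 0])) : (a * X - X * a) 0 0 = 0 := by
  have h := ha.eq
  have a10 : a 1 0 = 0 := hu.mul_left_eq_zero.mp (by simpa using congr($h 1 0))
  have a01 : a 0 1 = 0 := hu.mul_right_eq_zero.mp (by simpa using congr($h 0 1).symm)
  have a00 : a 0 0 * (1 + b) = (1 + b) * a 0 0 := by simpa using congr($h 0 0)
  rw [commutator_X_eq]
  simp [a10, a01, a00]

theorem commutator_X_one_zero_of_commute_single_zero_one (ha : Commute a (single 0 1 1)) :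
    (a * X - X * a) 1 0 = 0 := by
  have a10 : a 1 0 = 0 := row_eq_zero_of_commute_single ha.symm Fin.zero_ne_one
  have a00 : a 0 0 = a 1 1 := diag_eq_of_commute_single ha.symm
  rw [commutator_X_eq]
  simp [a10, a00]

theorem commutator_X_eq_zero_of_commute_single_one_zero (hu : IsUnit (1 + b))
    (ha : Commute a (single 1 0 1)) (h10 : (a * X - X * a) 1 0 = 0)
    (h00 : (a * X - X * a) 0 0 = 0) : a * X - X * a = 0 := by
  have a01 : a 0 1 = 0 := col_eq_zero_of_commute_single ha.symm Fin.zero_ne_one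
  have a11 : a 1 1 = a 0 0 := diag_eq_of_commute_single ha.symm
  rw [commutator_X_eq] at h10 h00 ⊢
  have a10 : a 1 0 = 0 := hu.mul_left_eq_zero.mp (by simpa [a11] using h10)
  have hb : a 0 0 * b = b * a 0 0 := by
    simpa [a01, a10, sub_eq_zero, mul_add, add_mul] using h00
  ext i j
  fin_cases i <;> fin_cases j <;> simp [a01, a10, a11, hb, mul_add, add_mul]

end TwoByTwo

theorem stmt14 {B : Type*} [NormedRing B] [NormedAlgebra ℂ B] [CompleteSpace B]
    (hidp : HasInnerDerivationProperty B)
    (Δ : Matrix (Fin 2) (Fin 2) B → Matrix (Fin 2) (Fin 2) B)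
    (hΔ : Is2LocalDerivation Δ) (hvan : VanishesOnUnits Δ)
    (hdiag : VanishesOnDiag Δ)
    (b : B) (hb : ‖b‖ < 1) (lam : ℂ)
    (x : Matrix (Fin 2) (Fin 2) B)
    (hx : x = !![1 + b, b; lam • (1 : B), 0]) :
    Δ x = 0 := by
  subst hx
  have hu : IsUnit (1 + b) :=
    sub_neg_eq_add 1 b ▸ isUnit_one_sub_of_norm_lt_one (by rwa [norm_neg])
  have hM := hidp.matrix (n := Fin 2)
  obtain ⟨a₁, hc₁, hΔ₁⟩ := hΔ.exists_commute_of_map_eq_zero hM _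
    (hdiag (diagonal ![1 + b, 0]) fun _ _ => diagonal_apply_ne _)
  obtain ⟨a₂, hc₂, hΔ₂⟩ := hΔ.exists_commute_of_map_eq_zero hM _
    (hvan _ (Submodule.subset_span ⟨(0, 1), rfl⟩))
  obtain ⟨a₃, hc₃, hΔ₃⟩ := hΔ.exists_commute_of_map_eq_zero hM _
    (hvan _ (Submodule.subset_span ⟨(1, 0), rfl⟩))
  rw [hΔ₃]
  refine commutator_X_eq_zero_of_commute_single_one_zero hu hc₃ ?_ ?_
  · rw [← hΔ₃, hΔ₂]
    exact commutator_X_one_zero_of_commute_single_zero_one hc₂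
  · rw [← hΔ₃, hΔ₁]
    exact commutator_X_zero_zero_of_commute_diagonal hu hc₁
end
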